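/- For every nonnegative integer n, the Hankel determinant det[A_{i+j}]_{0≤i,j≤n} of the Apéry numbers A_m = ∑_{k=0}^m C(m,k)^2 C(m+k,k)^2 is divisible by 24^n. -/

import Mathlib

/-!
Modulo `24` the Apéry numbers satisfy `A m ≡ 5 ^ m`, so the Hankel matrix `(A (i + j))` is
congruent to the rank-one matrix `(5 ^ i * 5 ^ j)`, and any matrix of size `N` congruent to a
rank-one matrix modulo `d` has determinant divisible by `d ^ (N - 1)`: expanding the
determinant multilinearly in the rows, every term with two rows taken from the rank-one part
vanishes.

Modulo `3` the congruence follows, digit by digit in base `3`, from Gessel's Lucas-type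
congruence `A (p * q + t) ≡ A t * A q [MOD p]` for `t < p`.
Modulo `8` it comes from the central Delannoy numbers `D m = ∑ C(m,k) C(m+k,k)`: every term
`C(m,k) C(m+k,k)` with `k ≥ 1` is even, whence `A m + 1 ≡ 2 * D m [MOD 8]`, and the identity
`D m = ∑ C(m,k)^2 2^k` gives `D m ≡ ∑ C(m,k) 2^k = 3 ^ m [MOD 4]`.
-/

open Finset Polynomial

theorem Matrix.pow_card_sub_one_dvd_det_of_dvd_sub_mul {ι R : Type*} [Fintype ι]
    [DecidableEq ι] [CommRing R] (A : Matrix ι ι R) (u v : ι → R) (d : R)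
    (h : ∀ i j, d ∣ A i j - u i * v j) :
    d ^ (Fintype.card ι - 1) ∣ A.det := by
  choose E hE using h
  have hA : A = (fun i => d • E i) + fun i => u i • v := by
    ext i j
    simp only [Pi.add_apply, Pi.smul_apply, smul_eq_mul]
    linear_combination hE i j
  rw [Matrix.det, hA, (Matrix.detRowAlternating (n := ι) (R := R)).map_add_univ]
  refine dvd_sum fun s _ => ?_
  have hrows : s.piecewise (fun i => d • E i) (fun i => u i • v)
      = fun i => s.piecewise (fun _ => d) u i • s.piecewise E (fun _ => v) i := by
    ext i : 1
    by_cases hi : i ∈ s <;> simp [hi]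
  rw [hrows, AlternatingMap.map_smul_univ, prod_piecewise, univ_inter, prod_const, smul_eq_mul]
  by_cases hs : ∀ i ∉ s, ∀ j ∉ s, i = j
  · have hcompl : sᶜ.card ≤ 1 :=
      card_le_one.mpr fun i hi j hj => hs i (mem_compl.mp hi) j (mem_compl.mp hj)
    rw [card_compl] at hcompl
    exact ((pow_dvd_pow d (by omega)).mul_right _).mul_right _
  · push Not at hs
    obtain ⟨i, hi, j, hj, hij⟩ := hs
    rw [AlternatingMap.map_eq_zero_of_eq _ _ (by simp [hi, hj]) hij, mul_zero]
    exact dvd_zero _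

theorem Finset.sum_range_mul_eq_sum_sum {M : Type*} [AddCommMonoid M] (f : ℕ → M) (p N : ℕ) :
    ∑ k ∈ range (p * N), f k = ∑ j ∈ range N, ∑ r ∈ range p, f (p * j + r) := by
  induction N with
  | zero => simp
  | succ N ih => rw [mul_add_one, sum_range_add, ih, sum_range_succ]

theorem Nat.sum_range_choose_mul_add_choose (m : ℕ) :
    ∑ k ∈ range (m + 1), m.choose k * (m + k).choose k =
      ∑ k ∈ range (m + 1), m.choose k ^ 2 * 2 ^ k := by
  have h₁ : ((X + 1) ^ m * (X + 2) ^ m : ℕ[X]) =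
      ∑ k ∈ range (m + 1), (X + 1) ^ (m + k) * (m.choose k : ℕ[X]) := by
    rw [show (X + 2 : ℕ[X]) = (X + 1) + 1 by ring, add_pow (X + 1 : ℕ[X]) 1, mul_sum]
    refine sum_congr rfl fun k _ => ?_
    ring
  have h₂ : ((X + 1) ^ m * (X + 2) ^ m : ℕ[X]) =
      ∑ k ∈ range (m + 1), (X + 1) ^ m * X ^ (m - k) * ((m.choose k * 2 ^ k : ℕ) : ℕ[X]) := by
    rw [add_comm X (2 : ℕ[X]), add_pow (2 : ℕ[X]) X, mul_sum]
    refine sum_congr rfl fun k _ => ?_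
    push_cast
    ring
  have hcoeff := congrArg (coeff · m) (h₁.symm.trans h₂)
  simp only [finsetSum_coeff, coeff_mul_natCast, coeff_mul_X_pow', coeff_X_add_one_pow,
    Nat.cast_id] at hcoeff
  rw [sum_congr rfl fun k _ => by rw [mul_comm, ← Nat.choose_symm_add], hcoeff]
  refine sum_congr rfl fun k hk => ?_
  have hk : k ≤ m := Nat.lt_succ_iff.mp (mem_range.mp hk)
  rw [if_pos (Nat.sub_le m k), Nat.sub_sub_self hk]
  ring

theorem Nat.sum_range_choose_mul_add_choose_modEq (m : ℕ) :
    ∑ k ∈ range (m + 1), m.choose k * (m + k).choose k ≡ 3 ^ m [MOD 4] := by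
  rw [← ZMod.natCast_eq_natCast_iff, Nat.sum_range_choose_mul_add_choose,
    show 3 = 2 + 1 by rfl, add_pow]
  push_cast
  refine sum_congr rfl fun k _ => ?_
  rcases k with _ | k
  · simp
  · have hsq : ∀ x : ZMod 4, x ^ 2 * 2 = x * 2 := by decide
    linear_combination (2 : ZMod 4) ^ k * hsq _

theorem Nat.two_dvd_choose_mul_add_choose (m : ℕ) {k : ℕ} (hk : 0 < k) :
    2 ∣ m.choose k * (m + k).choose k := by
  have h := Nat.choose_mul (n := m + k) (k := 2 * k) (s := k) (by omega)
  rw [Nat.add_sub_cancel, show 2 * k - k = k by omega, ← Nat.centralBinom_eq_two_mul_choose] at h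
  rw [mul_comm, ← h]
  exact dvd_mul_of_dvd_right (Nat.two_dvd_centralBinom_of_one_le hk) _

theorem Nat.choose_mul_add_mul_add_cast_zmod {p : ℕ} [Fact p.Prime] {a b s r : ℕ} (hs : s < p)
    (hr : r < p) : ((p * a + s).choose (p * b + r) : ZMod p) = s.choose r * a.choose b := by
  have hp := (Fact.out : p.Prime).pos
  rw [(ZMod.natCast_eq_natCast_iff _ _ _).mpr Choose.choose_modEq_choose_mod_mul_choose_div_nat]
  simp [Nat.mul_add_div hp, Nat.mod_eq_of_lt hs, Nat.mod_eq_of_lt hr, Nat.div_eq_of_lt hs,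
    Nat.div_eq_of_lt hr]

def apery (m : ℕ) : ℕ := ∑ k ∈ range (m + 1), m.choose k ^ 2 * (m + k).choose k ^ 2

theorem apery_eq_sum_range {m N : ℕ} (h : m < N) :
    apery m = ∑ k ∈ range N, m.choose k ^ 2 * (m + k).choose k ^ 2 := by
  refine sum_subset (range_subset_range.mpr h) fun k _ hk => ?_
  simp [Nat.choose_eq_zero_of_lt (not_lt.mp (mt mem_range.mpr hk))]

theorem apery_term_mul_add_cast_zmod {p : ℕ} [Fact p.Prime] {q t j r : ℕ} (ht : t < p)
    (hr : r < p) :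
    (((p * q + t).choose (p * j + r) ^ 2 * (p * q + t + (p * j + r)).choose (p * j + r) ^ 2 : ℕ)
      : ZMod p) =
      (t.choose r ^ 2 * (t + r).choose r ^ 2 : ℕ) * (q.choose j ^ 2 * (q + j).choose j ^ 2 : ℕ) := by
  push_cast
  rw [Nat.choose_mul_add_mul_add_cast_zmod ht hr]
  rcases lt_or_ge (t + r) p with htr | htr
  · rw [show p * q + t + (p * j + r) = p * (q + j) + (t + r) by ring,
      Nat.choose_mul_add_mul_add_cast_zmod htr hr]
    ring
  · -- both `C(p(q + j) + t + r, pj + r)` and `C(t + r, r)` have a carry and vanish mod `p`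
    obtain ⟨s, hs⟩ := Nat.exists_eq_add_of_le htr
    have hsr : s < r := by omega
    have hbig : ((p * q + t + (p * j + r)).choose (p * j + r) : ZMod p) = 0 := by
      rw [show p * q + t + (p * j + r) = p * (q + j + 1) + s by ring_nf; omega,
        Nat.choose_mul_add_mul_add_cast_zmod (by omega) hr, Nat.choose_eq_zero_of_lt hsr]
      simp
    have hsmall : ((t + r).choose r : ZMod p) = 0 := by
      have := Nat.choose_mul_add_mul_add_cast_zmod (p := p) (a := 1) (b := 0) (by omega : s < p) hr
      simpa [hs, Nat.choose_eq_zero_of_lt hsr] using this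
    rw [hbig, hsmall]
    ring

theorem apery_mul_add_cast_zmod {p : ℕ} [Fact p.Prime] (q : ℕ) {t : ℕ} (ht : t < p) :
    (apery (p * q + t) : ZMod p) = apery t * apery q := by
  rw [apery_eq_sum_range (show p * q + t < p * (q + 1) by rw [mul_add_one]; omega),
    apery_eq_sum_range ht, apery_eq_sum_range (Nat.lt_succ_self q), sum_range_mul_eq_sum_sum]
  push_cast [sum_mul_sum]
  rw [sum_comm]
  refine sum_congr rfl fun r hr => sum_congr rfl fun j _ => ?_
  exact_mod_cast apery_term_mul_add_cast_zmod ht (mem_range.mp hr)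

theorem apery_modEq_three (m : ℕ) : apery m ≡ 5 ^ m [MOD 3] := by
  rw [← ZMod.natCast_eq_natCast_iff, Nat.cast_pow]
  induction m using Nat.strong_induction_on with
  | _ m ih =>
    obtain hm | hm := lt_or_ge m 3
    · interval_cases m <;> rfl
    · obtain ⟨q, t, ht, rfl⟩ : ∃ q t, t < 3 ∧ m = 3 * q + t :=
        ⟨m / 3, m % 3, Nat.mod_lt _ (by norm_num), (Nat.div_add_mod m 3).symm⟩
      rw [apery_mul_add_cast_zmod q ht, ih t (by omega), ih q (by omega), pow_add, pow_mul,
        ZMod.pow_card]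
      ring

theorem apery_add_one_modEq (m : ℕ) :
    apery m + 1 ≡ 2 * ∑ k ∈ range (m + 1), m.choose k * (m + k).choose k [MOD 8] := by
  have hsq : ∀ a : ℕ, 2 ∣ a → ((a ^ 2 : ℕ) : ZMod 8) = 2 * a := by
    rintro _ ⟨c, rfl⟩
    push_cast
    generalize (c : ZMod 8) = x
    revert x
    decide
  rw [apery, ← ZMod.natCast_eq_natCast_iff]
  simp_rw [← mul_pow]
  rw [sum_range_succ', sum_range_succ', Nat.cast_add, Nat.cast_add, Nat.cast_sum,
    sum_congr rfl fun k _ => hsq _ (Nat.two_dvd_choose_mul_add_choose m k.succ_pos)]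
  push_cast [Nat.choose_zero_right]
  rw [mul_add, mul_sum]
  ring

theorem apery_modEq_eight (m : ℕ) : apery m ≡ 5 ^ m [MOD 8] := by
  have h : apery m + 1 ≡ 2 * 3 ^ m [MOD 8] :=
    (apery_add_one_modEq m).trans ((Nat.sum_range_choose_mul_add_choose_modEq m).mul_left' 2)
  have hpow : 2 * 3 ^ m ≡ 5 ^ m + 1 [MOD 8] := by
    rw [← ZMod.natCast_eq_natCast_iff]
    push_cast
    obtain ⟨i, rfl | rfl⟩ := Nat.even_or_odd' m
    all_goals
      simp only [pow_add, pow_mul, show (3 : ZMod 8) ^ 2 = 1 by decide,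
        show (5 : ZMod 8) ^ 2 = 1 by decide, one_pow, one_mul, pow_one]
      decide
  exact Nat.ModEq.add_right_cancel' 1 (h.trans hpow)

theorem apery_modEq_twentyFour (m : ℕ) : apery m ≡ 5 ^ m [MOD 24] :=
  (Nat.modEq_and_modEq_iff_modEq_mul (by norm_num : Nat.Coprime 8 3)).mp
    ⟨apery_modEq_eight m, apery_modEq_three m⟩

theorem apery_A_hankel_det_div (n : ℕ) :
    (24 : ℤ) ^ n ∣
      Matrix.det (Matrix.of fun i j : Fin (n + 1) =>
        ((∑ k ∈ Finset.range (i.1 + j.1 + 1),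
            ((i.1 + j.1).choose k) ^ 2 * ((i.1 + j.1 + k).choose k) ^ 2 : ℕ) : ℤ)) := by
  have h := Matrix.pow_card_sub_one_dvd_det_of_dvd_sub_mul
    (Matrix.of fun i j : Fin (n + 1) => ((apery (i.1 + j.1) : ℕ) : ℤ))
    (fun i => 5 ^ i.1) (fun j => 5 ^ j.1) 24 fun i j => by
      rw [Matrix.of_apply, ← pow_add]
      exact_mod_cast Nat.modEq_iff_dvd.mp (apery_modEq_twentyFour _).symm
  rwa [Fintype.card_fin, Nat.add_sub_cancel] at h
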